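/- Let the block matrix [[A, X],[X*, B]] in M_{2n} be positive semidefinite, with A, B, X ∈ M_n. Then for every s > 0 there exists a unitary matrix V ∈ M_n such that |X*| ≤ (s/2) A + (1/(2s)) V* B V. -/

import Mathlib

/-!
Apply polar decomposition to `Xᴴ`: it gives a unitary `U` with `X * U = |Xᴴ|`. Compressing the
positive block matrix `[[A, X], [Xᴴ, B]]` by the column `[1; -s⁻¹ U]` gives
`A - 2 s⁻¹ |Xᴴ| + s⁻² Uᴴ B U ≥ 0`, which is the claim after multiplying by `s / 2`.
-/

open Matrix Set ComplexOrder

variable {m : Type*}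

/-- The modulus `|X| = (XᴴX)^{1/2}` of a matrix. -/
noncomputable def matAbs [Fintype m] [DecidableEq m] (X : Matrix m m ℂ) : Matrix m m ℂ :=
  (Matrix.posSemidef_conjTranspose_mul_self X).1.eigenvectorUnitary.1 *
    diagonal ((↑) ∘ (√·) ∘ (Matrix.posSemidef_conjTranspose_mul_self X).1.eigenvalues) *
    (star (Matrix.posSemidef_conjTranspose_mul_self X).1.eigenvectorUnitary : Matrix m m ℂ)

theorem matAbs_posSemidef [Fintype m] [DecidableEq m] (X : Matrix m m ℂ) :
    (matAbs X).PosSemidef :=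
  by
    have hD : (diagonal ((↑) ∘ (√·) ∘
        (Matrix.posSemidef_conjTranspose_mul_self X).1.eigenvalues) : Matrix m m ℂ).PosSemidef :=
      posSemidef_diagonal_iff.mpr fun i => Complex.zero_le_real.mpr (Real.sqrt_nonneg _)
    exact hD.mul_mul_conjTranspose_same _

/-- Functional calculus: apply `f : ℝ → ℝ` to a Hermitian matrix via its spectral
decomposition (junk value `0` for non-Hermitian input). -/
noncomputable def matFun [Fintype m] [DecidableEq m] (f : ℝ → ℝ) (X : Matrix m m ℂ) :
    Matrix m m ℂ :=
  if h : X.IsHermitian then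
    (h.eigenvectorUnitary : Matrix m m ℂ) *
      Matrix.diagonal (fun i => (f (h.eigenvalues i) : ℂ)) *
      star (h.eigenvectorUnitary : Matrix m m ℂ)
  else 0

/-- Real part `Re A = (A + Aᴴ)/2`. -/
noncomputable def reM (A : Matrix m m ℂ) : Matrix m m ℂ := (1/2 : ℂ) • (A + Aᴴ)

/-- Imaginary part `Im A = (A - Aᴴ)/(2i)`. -/
noncomputable def imM (A : Matrix m m ℂ) : Matrix m m ℂ := (1/(2*Complex.I)) • (A - Aᴴ)

/-- Numerical range `W(A) = {x* A x : x*x = 1}`. -/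
def numRange [Fintype m] (A : Matrix m m ℂ) : Set ℂ :=
  {z | ∃ x : m → ℂ, star x ⬝ᵥ x = 1 ∧ z = star x ⬝ᵥ A.mulVec x}

/-- The sector `S_α = {z : Re z ≥ 0, |Im z| ≤ (Re z) tan α}`. -/
def sector (α : ℝ) : Set ℂ := {z | 0 ≤ z.re ∧ |z.im| ≤ z.re * Real.tan α}

section Polar

variable {𝕜 E F : Type*} [RCLike 𝕜] [NormedAddCommGroup E] [InnerProductSpace 𝕜 E]
  [FiniteDimensional 𝕜 E] [AddCommGroup F] [Module 𝕜 F]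

theorem LinearMap.exists_linearIsometryEquiv_apply_eq_of_norm_eq (x p : F →ₗ[𝕜] E)
    (h : ∀ v, ‖x v‖ = ‖p v‖) : ∃ U : E ≃ₗᵢ[𝕜] E, ∀ v, U (p v) = x v := by
  have hker : LinearMap.ker p ≤ LinearMap.ker x := fun v hv => by
    rw [LinearMap.mem_ker, ← norm_eq_zero, h, norm_eq_zero, ← LinearMap.mem_ker]
    exact hv
  let L₀ : LinearMap.range p →ₗ[𝕜] E :=
    (LinearMap.ker p).liftQ x hker ∘ₗ p.quotKerEquivRange.symm.toLinearMap
  have hL₀ : ∀ v, L₀ ⟨p v, LinearMap.mem_range_self p v⟩ = x v := fun v => by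
    rw [LinearMap.comp_apply, LinearEquiv.coe_coe, LinearMap.quotKerEquivRange_symm_apply_image]
    rfl
  let L : LinearMap.range p →ₗᵢ[𝕜] E :=
    ⟨L₀, by rintro ⟨_, v, rfl⟩; exact (congrArg norm (hL₀ v)).trans (h v)⟩
  refine ⟨L.extend.toLinearIsometryEquiv rfl, fun v => ?_⟩
  exact (L.extend_apply ⟨p v, LinearMap.mem_range_self p v⟩).trans (hL₀ v)

end Polar

section

variable [Fintype m] [DecidableEq m]

open scoped MatrixOrder in
theorem matAbs_eq_cfcSqrt (X : Matrix m m ℂ) : matAbs X = CFC.sqrt (Xᴴ * X) := by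
  have h := Matrix.posSemidef_conjTranspose_mul_self X
  rw [CFC.sqrt_eq_real_sqrt _ h.nonneg, cfcₙ_eq_cfc (hf0 := Real.sqrt_zero), h.1.cfc_eq,
    Matrix.IsHermitian.cfc, Unitary.conjStarAlgAut_apply]
  rfl

open scoped MatrixOrder in
theorem matAbs_mul_self (X : Matrix m m ℂ) : matAbs X * matAbs X = Xᴴ * X := by
  rw [matAbs_eq_cfcSqrt]
  exact CFC.sqrt_mul_sqrt_self _ (Matrix.posSemidef_conjTranspose_mul_self X).nonneg

theorem Matrix.exists_mem_unitaryGroup_mul_eq {X P : Matrix m m ℂ} (h : Xᴴ * X = Pᴴ * P) :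
    ∃ U ∈ unitaryGroup m ℂ, U * P = X := by
  set x := toEuclideanCLM (n := m) (𝕜 := ℂ) X
  set p := toEuclideanCLM (n := m) (𝕜 := ℂ) P
  have hxp : star x * x = star p * p := by
    simpa only [map_mul, ← star_eq_conjTranspose, map_star] using
      congrArg (toEuclideanCLM (n := m) (𝕜 := ℂ)) h
  obtain ⟨U', hU'⟩ := LinearMap.exists_linearIsometryEquiv_apply_eq_of_norm_eq
    x.toLinearMap p.toLinearMap fun v => by
      simp only [ContinuousLinearMap.coe_coe,
        ContinuousLinearMap.apply_norm_eq_sqrt_inner_adjoint_right,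
        ← ContinuousLinearMap.star_eq_adjoint, ← ContinuousLinearMap.mul_def, hxp]
  let u := Unitary.linearIsometryEquiv.symm U'
  let U := (toEuclideanCLM (n := m) (𝕜 := ℂ)).symm u
  have hUP : toEuclideanCLM (n := m) (𝕜 := ℂ) (U * P) = x := by
    rw [map_mul (toEuclideanCLM (n := m) (𝕜 := ℂ)), StarAlgEquiv.apply_symm_apply]
    ext v : 1
    exact hU' v
  exact ⟨U, Unitary.map_mem (toEuclideanCLM (n := m) (𝕜 := ℂ)).symm.toStarAlgHom u.2,
    (toEuclideanCLM (n := m) (𝕜 := ℂ)).injective hUP⟩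

end

theorem Matrix.PosSemidef.of_fromBlocks_compress {k R : Type*} [Fintype m] [Fintype k]
    [DecidableEq m] [Ring R] [PartialOrder R] [StarRing R] {A : Matrix m m R} {X : Matrix m k R}
    {B : Matrix k k R} (h : (fromBlocks A X Xᴴ B).PosSemidef) (W : Matrix k m R) :
    (A + X * W + Wᴴ * Xᴴ + Wᴴ * B * W).PosSemidef := by
  have := h.conjTranspose_mul_mul_same (fromRows 1 W)
  rw [conjTranspose_fromRows_eq_fromCols_conjTranspose, fromCols_mul_fromBlocks,
    fromCols_mul_fromRows, conjTranspose_one, Matrix.one_mul, Matrix.one_mul, Matrix.mul_one,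
    Matrix.add_mul] at this
  convert this using 1
  abel

theorem block_psd_abs_le_right {n : ℕ} (A B X : Matrix (Fin n) (Fin n) ℂ)
    (h : (Matrix.fromBlocks A X Xᴴ B).PosSemidef) :
    ∀ s : ℝ, 0 < s → ∃ V ∈ Matrix.unitaryGroup (Fin n) ℂ,
      ((s/2) • A + (1/(2*s)) • (Vᴴ * B * V) - matAbs Xᴴ).PosSemidef := by
  intro s hs
  set P := matAbs Xᴴ
  have hP : P.IsHermitian := (matAbs_posSemidef Xᴴ).1
  obtain ⟨U, hU, hUP⟩ := exists_mem_unitaryGroup_mul_eq (X := Xᴴ) (P := P)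
    (by rw [hP.eq, matAbs_mul_self])
  have hXU : X * U = P := by
    rw [← conjTranspose_conjTranspose X, ← hUP, conjTranspose_mul, hP.eq, Matrix.mul_assoc,
      ← star_eq_conjTranspose, mem_unitaryGroup_iff'.mp hU, Matrix.mul_one]
  refine ⟨U, hU, ?_⟩
  have hcompress := h.of_fromBlocks_compress ((-s⁻¹ : ℝ) • U)
  rw [Matrix.mul_smul, hXU, conjTranspose_smul, star_trivial, Matrix.smul_mul,
    ← conjTranspose_mul, hXU, hP.eq, Matrix.smul_mul, Matrix.smul_mul,
    Matrix.mul_smul] at hcompress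
  convert hcompress.smul (a := s / 2) (by positivity) using 1
  match_scalars <;> field_simp
  norm_num
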